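/- Let (F, ⪯) be a consecutive ordered system on a finite set N, i.e., F ⪯ G ⪯ H implies F ∩ H ⊆ G. Then for all F, G ∈ F and all L, U ∈ F with L, U ⊆ F ∪ G and L ⪯ F, G ⪯ U, the pointwise inequality 1_L + 1_U ≤ 1_F + 1_G holds on N. -/

import Mathlib

/-!
Counting with multiplicity, `1_L + 1_U = 1_{L ∪ U} + 1_{L ∩ U}` and likewise for `F, G`.
The hypotheses give `L ∪ U ⊆ F ∪ G`, and consecutiveness applied to the chains
`L ⪯ F ⪯ U` and `L ⪯ G ⪯ U` gives `L ∩ U ⊆ F ∩ G`; compare the two sides termwise.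
-/

namespace Finset

variable {N R : Type*} [DecidableEq N]

theorem ite_mem_add_ite_mem_eq_union_inter [AddCommMonoidWithOne R] (s t : Finset N) (a : N) :
    (if a ∈ s then (1 : R) else 0) + (if a ∈ t then 1 else 0) =
      (if a ∈ s ∪ t then 1 else 0) + (if a ∈ s ∩ t then 1 else 0) := by
  by_cases hs : a ∈ s <;> by_cases ht : a ∈ t <;> simp [hs, ht, add_comm]

theorem ite_mem_le_ite_mem [AddMonoidWithOne R] [PartialOrder R] [ZeroLEOneClass R]
    {s t : Finset N} (h : s ⊆ t) (a : N) :
    (if a ∈ s then (1 : R) else 0) ≤ if a ∈ t then 1 else 0 := by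
  by_cases hs : a ∈ s
  · simp [hs, h hs]
  · simp only [hs, if_false]
    split_ifs <;> simp

theorem ite_mem_add_ite_mem_le [AddCommMonoidWithOne R] [PartialOrder R] [IsOrderedAddMonoid R]
    [ZeroLEOneClass R] {F G L U : Finset N} (hunion : L ∪ U ⊆ F ∪ G) (hinter : L ∩ U ⊆ F ∩ G)
    (a : N) :
    (if a ∈ L then (1 : R) else 0) + (if a ∈ U then 1 else 0) ≤
      (if a ∈ F then 1 else 0) + (if a ∈ G then 1 else 0) := by
  rw [ite_mem_add_ite_mem_eq_union_inter L U, ite_mem_add_ite_mem_eq_union_inter F G]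
  exact add_le_add (ite_mem_le_ite_mem hunion a) (ite_mem_le_ite_mem hinter a)

end Finset

theorem stmt_15 {N : Type*} [DecidableEq N]
    (Fam : Finset (Finset N))
    (le : Finset N → Finset N → Prop)
    (hconsec : ∀ F ∈ Fam, ∀ G ∈ Fam, ∀ H ∈ Fam, le F G → le G H → F ∩ H ⊆ G)
    (F G L U : Finset N) (hF : F ∈ Fam) (hG : G ∈ Fam) (hL : L ∈ Fam) (hU : U ∈ Fam)
    (hLsub : L ⊆ F ∪ G) (hUsub : U ⊆ F ∪ G)
    (hLF : le L F) (hLG : le L G) (hFU : le F U) (hGU : le G U) :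
    ∀ a : N,
      (if a ∈ L then (1 : ℝ) else 0) + (if a ∈ U then (1 : ℝ) else 0) ≤
        (if a ∈ F then (1 : ℝ) else 0) + (if a ∈ G then (1 : ℝ) else 0) := by
  have hinter : L ∩ U ⊆ F ∩ G :=
    Finset.subset_inter (hconsec L hL F hF U hU hLF hFU) (hconsec L hL G hG U hU hLG hGU)
  exact Finset.ite_mem_add_ite_mem_le (Finset.union_subset hLsub hUsub) hinter
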